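/- arXiv:1103.5010 — 2 statements merged into one kernel-verified Lean document; each statement's English description precedes it below -/
import Mathlib

section
/- Let t, s be real numbers with 0 < t < 1/2 and (7t − 2)/(6(t + 1)) < s ≤ 1/6. For k an integer put z(k) = (−k³/6 + s·k) + i·(k²/2 − t) ∈ C. Then the four complex numbers w₁ = −z(−1), w₂ = z(0), w₃ = −z(1), w₄ = z(2) are all nonzero, and there exists φ₀ ∈ (0, 1) such that each wⱼ can be written as r·exp(iπφ) with r > 0 and φ₀ ≤ φ ≤ φ₀ + 1. -/
/-! The four charges lie in the closed half-plane to the left of the ray through `w₄`, i.e.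
`w / w₄` has nonnegative imaginary part for each of them; so every `wⱼ` has a phase in
`[arg w₄ / π, arg w₄ / π + 1]`, and `0 < arg w₄ < π` because `Im w₄ = 2 - t > 0`. For `w₁`, `w₂`
and `w₄` this half-plane condition is a sign check; for `w₃` it is `6 s (t + 1) ≥ 7 t - 2`,
which is exactly the lower bound on `s`. -/

open Complex Real

lemma exists_eq_mul_exp_of_cross_nonneg {u w : ℂ} (hu : u ≠ 0) (hw : w ≠ 0)
    (h : 0 ≤ u.re * w.im - u.im * w.re) :
    ∃ r φ : ℝ, 0 < r ∧ u.arg / π ≤ φ ∧ φ ≤ u.arg / π + 1 ∧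
      w = r * exp (π * φ * I) := by
  set v := w / u
  have hv : v ≠ 0 := div_ne_zero hw hu
  have hv_im : 0 ≤ v.im := by
    rw [div_im, ← sub_div]
    exact div_nonneg (by linarith) (normSq_nonneg u)
  have hv_arg : v.arg / π ∈ Set.Icc 0 1 :=
    ⟨div_nonneg (arg_nonneg_iff.mpr hv_im) pi_pos.le,
      div_le_one_of_le₀ (arg_le_pi v) pi_pos.le⟩
  refine ⟨‖u‖ * ‖v‖, u.arg / π + v.arg / π, by positivity, by linarith [hv_arg.1],
    by linarith [hv_arg.2], ?_⟩
  have hφ : (π : ℂ) * ((u.arg / π + v.arg / π : ℝ) : ℂ) = u.arg + v.arg := by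
    push_cast
    field_simp
  calc w = u * v := (mul_div_cancel₀ w hu).symm
    _ = ‖u‖ * exp (u.arg * I) * (‖v‖ * exp (v.arg * I)) := by
      rw [norm_mul_exp_arg_mul_I, norm_mul_exp_arg_mul_I]
    _ = _ := by
      rw [hφ, add_mul, Complex.exp_add]
      push_cast
      ring

lemma arg_div_pi_mem_Ioo_of_im_pos {u : ℂ} (hu : 0 < u.im) : u.arg / π ∈ Set.Ioo 0 1 := by
  have h_pos : 0 < u.arg :=
    lt_of_le_of_ne (arg_nonneg_iff.mpr hu.le) fun h ↦ hu.ne' (arg_eq_zero_iff.mp h.symm).2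
  exact ⟨div_pos h_pos pi_pos, (div_lt_one pi_pos).mpr (arg_lt_pi_iff.mpr (Or.inr hu.ne'))⟩

theorem stmt_9 (t s : ℝ) (ht0 : 0 < t) (ht1 : t < 1/2)
    (hs1 : (7 * t - 2) / (6 * (t + 1)) < s) (hs2 : s ≤ 1/6)
    (z : ℤ → ℂ)
    (hz : ∀ k : ℤ, z k = (-(k : ℂ) ^ 3 / 6 + (s : ℂ) * k) +
      Complex.I * ((k : ℂ) ^ 2 / 2 - (t : ℂ)))
    (w₁ w₂ w₃ w₄ : ℂ)
    (hw₁ : w₁ = -z (-1)) (hw₂ : w₂ = z 0) (hw₃ : w₃ = -z 1) (hw₄ : w₄ = z 2) :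
    (w₁ ≠ 0 ∧ w₂ ≠ 0 ∧ w₃ ≠ 0 ∧ w₄ ≠ 0) ∧
      ∃ φ₀ : ℝ, 0 < φ₀ ∧ φ₀ < 1 ∧
        ∀ w ∈ ({w₁, w₂, w₃, w₄} : Set ℂ), ∃ r φ : ℝ, 0 < r ∧
          φ₀ ≤ φ ∧ φ ≤ φ₀ + 1 ∧ w = r * Complex.exp (Real.pi * φ * Complex.I) := by
  have e₁ : w₁ = ⟨s - 1/6, t - 1/2⟩ := by rw [hw₁, hz]; apply Complex.ext <;> norm_num; ring
  have e₂ : w₂ = ⟨0, -t⟩ := by rw [hw₂, hz]; apply Complex.ext <;> norm_num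
  have e₃ : w₃ = ⟨1/6 - s, t - 1/2⟩ := by rw [hw₃, hz]; apply Complex.ext <;> norm_num; ring
  have e₄ : w₄ = ⟨2 * s - 4/3, 2 - t⟩ := by rw [hw₄, hz]; apply Complex.ext <;> norm_num; ring
  have hs1' : 7 * t - 2 < s * (6 * (t + 1)) := (div_lt_iff₀ (by linarith)).mp hs1
  obtain ⟨hw₁_ne, hw₂_ne, hw₃_ne, hw₄_ne⟩ : w₁ ≠ 0 ∧ w₂ ≠ 0 ∧ w₃ ≠ 0 ∧ w₄ ≠ 0 := by
    refine ⟨?_, ?_, ?_, ?_⟩ <;> refine fun h ↦ absurd (congrArg im h) ?_ <;>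
      simp [e₁, e₂, e₃, e₄] <;> linarith
  obtain ⟨hφ₀_pos, hφ₀_lt⟩ := arg_div_pi_mem_Ioo_of_im_pos (u := w₄) (by rw [e₄]; simp; linarith)
  refine ⟨⟨hw₁_ne, hw₂_ne, hw₃_ne, hw₄_ne⟩, w₄.arg / π, hφ₀_pos, hφ₀_lt, ?_⟩
  rintro w (rfl | rfl | rfl | rfl | rfl) <;>
    refine exists_eq_mul_exp_of_cross_nonneg hw₄_ne (by assumption) ?_ <;>
    simp only [e₁, e₂, e₃, e₄] <;> nlinarith
end

section
/- Let 𝒜 be an abelian category and let v be a function assigning to each object of 𝒜 a natural number, such that v(B) = v(A) + v(C) for every short exact sequence 0 → A → B → C → 0 in 𝒜. Assume: (i) every object E of 𝒜 has a subobject T(E) ⊆ E with v(T(E)) = 0 such that every subobject L ⊆ E with v(L) = 0 is contained in T(E); and (ii) for every object T with v(T) = 0, every ascending chain of subobjects of T stabilizes. Then 𝒜 is Noetherian, i.e., for every object E of 𝒜 every ascending chain of subobjects of E stabilizes. -/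
/-!
Along an ascending chain `f` of subobjects of `E`, the values `v (f m)` increase and are bounded
by `v E`, so they are constant from some `N` on. Then, for `m ≥ N`, the image of `f m` in
`E / f N` has `v = 0`, hence lies in the largest such subobject `T` of `E / f N`, which is
Noetherian. The chain of images therefore stabilizes, and since passing to `E / f N` is
injective on subobjects containing `f N`, so does `f`.
-/

open CategoryTheory Limits Subobject

namespace CategoryTheory

namespace Subobject

section

variable {C : Type*} [Category C] {E : C}

lemma exists_eq_of_forall_le_of_isNoetherianObject {T : Subobject E}
    [IsNoetherianObject (T : C)] (f : ℕ →o Subobject E) (hf : ∀ n, f n ≤ T) :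
    ∃ n, ∀ m, n ≤ m → f n = f m := by
  have : WellFoundedGT (Set.Iic T) := (subobjectOrderIso T).symm.strictMono.wellFoundedGT
  obtain ⟨n, hn⟩ := wellFoundedGT_iff_monotone_chain_condition.mp this
    ⟨fun n => ⟨f n, hf n⟩, fun _ _ h => f.monotone h⟩
  exact ⟨n, fun m hm => congrArg Subtype.val (hn m hm)⟩

end

variable {C : Type*} [Category C] [Abelian C] {E : C}

lemma le_of_arrow_comp_cokernel_π_eq_zero {A B : Subobject E}
    (h : B.arrow ≫ cokernel.π A.arrow = 0) : B ≤ A :=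
  le_of_comm (Abelian.monoLift A.arrow B.arrow h) (Abelian.monoLift_comp _ _ _)

noncomputable abbrev mapCokernel (K A : Subobject E) : Subobject (cokernel K.arrow) :=
  imageSubobject (A.arrow ≫ cokernel.π K.arrow)

lemma mapCokernel_monotone (K : Subobject E) : Monotone (mapCokernel K) := fun A B h => by
  simpa only [mapCokernel, ← ofLE_arrow h, Category.assoc] using imageSubobject_comp_le _ _

lemma le_of_mapCokernel_le {K A B : Subobject E} (hKA : K ≤ A)
    (h : mapCokernel K B ≤ mapCokernel K A) : B ≤ A := by
  have hK : K.arrow ≫ cokernel.π A.arrow = 0 := by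
    rw [← ofLE_arrow hKA, Category.assoc, cokernel.condition, comp_zero]
  set φ := cokernel.desc K.arrow (cokernel.π A.arrow) hK
  have hA : (mapCokernel K A).arrow ≫ φ = 0 :=
    imageSubobject_arrow_comp_eq_zero (by simp [φ])
  apply le_of_arrow_comp_cokernel_π_eq_zero
  calc B.arrow ≫ cokernel.π A.arrow = (B.arrow ≫ cokernel.π K.arrow) ≫ φ := by simp [φ]
    _ = factorThruImageSubobject _ ≫ ofLE _ _ h ≫ (mapCokernel K A).arrow ≫ φ := by simp
    _ = 0 := by rw [hA, comp_zero, comp_zero]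

lemma exact_ofLE_arrow_comp_cokernel_π {K A : Subobject E} (hKA : K ≤ A) :
    (ShortComplex.mk (ofLE K A hKA) (A.arrow ≫ cokernel.π K.arrow) (by simp)).Exact := by
  have hK := ShortComplex.exact_of_g_is_cokernel
    (ShortComplex.mk K.arrow (cokernel.π K.arrow) (cokernel.condition _)) (cokernelIsCokernel _)
  rw [ShortComplex.exact_iff_exact_up_to_refinements] at hK ⊢
  intro W x hx
  obtain ⟨W', π, hπ, y, hy⟩ := hK (x ≫ A.arrow) (by simpa using hx)
  exact ⟨W', π, hπ, y, by simpa [← cancel_mono A.arrow] using hy⟩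

/-- `0 → K → A → A / K → 0`, with `A / K` realised as the image of `A` in `E / K`. -/
noncomputable abbrev shortComplexMapCokernel {K A : Subobject E} (hKA : K ≤ A) :
    ShortComplex C :=
  .mk (ofLE K A hKA) (factorThruImageSubobject (A.arrow ≫ cokernel.π K.arrow))
    (by simp [← cancel_mono (mapCokernel K A).arrow])

lemma shortExact_shortComplexMapCokernel {K A : Subobject E} (hKA : K ≤ A) :
    (shortComplexMapCokernel hKA).ShortExact := by
  have hφ := ShortComplex.exact_iff_of_epi_of_isIso_of_mono
    (S₁ := shortComplexMapCokernel hKA)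
    (S₂ := .mk (ofLE K A hKA) (A.arrow ≫ cokernel.π K.arrow) (by simp))
    { τ₁ := 𝟙 _, τ₂ := 𝟙 _, τ₃ := (mapCokernel K A).arrow }
  exact .mk' (hφ.mpr (exact_ofLE_arrow_comp_cokernel_π hKA)) inferInstance inferInstance

end Subobject

variable {C : Type*} [Category C] [Abelian C]

def IsAdditiveOnShortExact (v : C → ℕ) : Prop :=
  ∀ S : ShortComplex C, S.ShortExact → v S.X₂ = v S.X₁ + v S.X₃

namespace IsAdditiveOnShortExact

variable {v : C → ℕ} (hv : IsAdditiveOnShortExact v)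
include hv

lemma le_of_mono {X Y : C} (m : X ⟶ Y) [Mono m] : v X ≤ v Y := by
  have : v Y = v X + v (cokernel m) := hv _ (.mk' (S := .mk m (cokernel.π m) (cokernel.condition m))
    (ShortComplex.exact_of_g_is_cokernel _ (cokernelIsCokernel m)) inferInstance inferInstance)
  omega

lemma eq_add_mapCokernel {E : C} {K A : Subobject E} (hKA : K ≤ A) :
    v (A : C) = v (K : C) + v (mapCokernel K A : C) :=
  hv _ (shortExact_shortComplexMapCokernel hKA)

lemma exists_forall_ge_eq {E : C} (f : ℕ →o Subobject E) :
    ∃ N, ∀ m, N ≤ m → v (f N : C) = v (f m : C) := by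
  obtain ⟨N, hN⟩ := wellFoundedGT_iff_monotone_chain_condition.mp
    (inferInstance : WellFoundedGT (Set.Iic (v E)))
    ⟨fun n => ⟨v (f n : C), hv.le_of_mono (f n).arrow⟩,
      fun _ _ h => hv.le_of_mono (ofLE _ _ (f.monotone h))⟩
  exact ⟨N, fun m hm => congrArg Subtype.val (hN m hm)⟩

end IsAdditiveOnShortExact

end CategoryTheory

theorem stmt_11 {C : Type*} [Category C] [Abelian C]
    (v : C → ℕ)
    (hv : ∀ S : ShortComplex C, S.ShortExact → v S.X₂ = v S.X₁ + v S.X₃)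
    (hT : ∀ E : C, ∃ T : Subobject E, v (T : C) = 0 ∧
      ∀ L : Subobject E, v (L : C) = 0 → L ≤ T)
    (hfin : ∀ T : C, v T = 0 →
      ∀ f : ℕ →o Subobject T, ∃ n : ℕ, ∀ m : ℕ, n ≤ m → f m = f n) :
    ∀ E : C, ∀ f : ℕ →o Subobject E, ∃ n : ℕ, ∀ m : ℕ, n ≤ m → f m = f n := by
  have hv : IsAdditiveOnShortExact v := hv
  intro E f
  obtain ⟨N, hN⟩ := hv.exists_forall_ge_eq f
  set K := f N
  obtain ⟨T, hT0, hTmax⟩ := hT (cokernel K.arrow)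
  have : IsNoetherianObject (T : C) := (isNoetherianObject_iff_monotone_chain_condition _).mpr
    fun g => (hfin _ hT0 g).imp fun n hn m hm => (hn m hm).symm
  have hvq : ∀ m, N ≤ m → v (mapCokernel K (f m) : C) = 0 := fun m hm => by
    have := hv.eq_add_mapCokernel (K := K) (f.monotone hm)
    have := hN m hm
    omega
  let q : ℕ →o Subobject (cokernel K.arrow) :=
    ⟨fun m => mapCokernel K (f m), (mapCokernel_monotone K).comp f.monotone⟩
  have hqT : ∀ m, q m ≤ T := fun m =>
    (q.monotone le_sup_left).trans (hTmax _ (hvq (m ⊔ N) le_sup_right))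
  obtain ⟨n, hn⟩ := exists_eq_of_forall_le_of_isNoetherianObject q hqT
  refine ⟨n ⊔ N, fun m hm => le_antisymm ?_ (f.monotone hm)⟩
  refine le_of_mapCokernel_le (f.monotone le_sup_right) (le_of_eq ?_)
  exact (hn m (le_sup_left.trans hm)).symm.trans (hn _ le_sup_left)
end
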